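/- Suppose bl = Σ_{i=1}^r f_i·x_i with r ≥ 2, where bl is a product of d linear forms having λ distinct linear factors (up to scaling), the x_i are pairwise coprime squarefree monomials, and the f_i are forms of degree d - deg(x_i). If deg(x_1)·deg(x_2) > λ (where x_1, x_2 are the two monomials of smallest degree), then there is a variable x dividing both bl and one of the x_i. -/

import Mathlib

/-! Suppose no variable occurring in some `x i` divides `bl`, and choose one variable `w i` from
each `x i`. The ideal generated by the chosen variables is prime and contains `bl`, hence contains
one of the `λ` representative linear factors `ℓ`, so all variables of `ℓ` are chosen ones. Since
no single variable divides `ℓ`, it involves two of them, from different `x j₁` and `x j₂`, and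
disjointness forces these two choices for every choice whose ideal contains `ℓ`. Thus each
representative accounts for at most a `1 / (deg x j₁ * deg x j₂) ≤ 1 / (deg x 0 * deg x 1)`
fraction of all choices, and covering all of them needs `λ ≥ deg x 0 * deg x 1`. -/

open MvPolynomial Finset

namespace MvPolynomial

variable {σ R : Type*}

theorem span_X_image_eq_ker_aeval [CommRing R] (A : Set σ) [DecidablePred (· ∈ A)] :
    Ideal.span (X '' A : Set (MvPolynomial σ R)) =
      RingHom.ker (aeval fun v => if v ∈ A then 0 else X v :
        MvPolynomial σ R →ₐ[R] MvPolynomial σ R) := by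
  set I := Ideal.span (X '' A : Set (MvPolynomial σ R))
  refine le_antisymm (Ideal.span_le.mpr ?_) fun p hp => ?_
  · rintro _ ⟨v, hv, rfl⟩
    simp [hv]
  · have hcomp : (Ideal.Quotient.mkₐ R I).comp (aeval fun v => if v ∈ A then 0 else X v) =
        Ideal.Quotient.mkₐ R I := by
      ext v
      by_cases hv : v ∈ A
      · have hX : X v ∈ I := Ideal.subset_span ⟨v, hv, rfl⟩
        simp [hv, Ideal.Quotient.eq_zero_iff_mem.mpr hX]
      · simp [hv]
    rw [← Ideal.Quotient.eq_zero_iff_mem, ← Ideal.Quotient.mkₐ_eq_mk R, ← hcomp,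
      AlgHom.comp_apply, RingHom.mem_ker.mp hp, map_zero]

theorem isPrime_span_X_image [CommRing R] [IsDomain R] (A : Set σ) :
    (Ideal.span (X '' A : Set (MvPolynomial σ R))).IsPrime := by
  classical
  rw [span_X_image_eq_ker_aeval]
  exact RingHom.ker_isPrime _

variable [CommSemiring R] {p : MvPolynomial σ R}

theorem IsHomogeneous.exists_eq_single_of_mem_support (hp : p.IsHomogeneous 1)
    {m : σ →₀ ℕ} (hm : m ∈ p.support) : ∃ v, m = Finsupp.single v 1 := by
  have hdeg : m.degree = 1 := (hp.degree_eq_sum_deg_support hm).symm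
  obtain ⟨v, hv⟩ : m ∈ Set.range fun v => Finsupp.single v 1 := Finsupp.range_single_one ▸ hdeg
  exact ⟨v, hv.symm⟩

theorem IsHomogeneous.mem_span_X_image_iff (hp : p.IsHomogeneous 1) {A : Set σ} :
    p ∈ Ideal.span (X '' A) ↔ ↑p.vars ⊆ A := by
  classical
  rw [mem_ideal_span_X_image]
  constructor
  · intro h v hv
    obtain ⟨m, hm, hvm⟩ := (mem_vars_iff_mem_support v).mp hv
    obtain ⟨u, rfl⟩ := hp.exists_eq_single_of_mem_support hm
    obtain ⟨i, hi, hiu⟩ := h _ hm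
    simp only [Finsupp.mem_support_iff, Finsupp.single_apply_ne_zero] at hvm hiu
    rw [hvm.1, ← hiu.1]
    exact hi
  · intro h m hm
    obtain ⟨u, rfl⟩ := hp.exists_eq_single_of_mem_support hm
    exact ⟨u, h ((mem_vars_iff_mem_support u).mpr ⟨_, hm, by simp⟩), by simp⟩

theorem IsHomogeneous.X_dvd_iff (hp : p.IsHomogeneous 1) {v : σ} :
    X v ∣ p ↔ ↑p.vars ⊆ ({v} : Set σ) := by
  rw [← hp.mem_span_X_image_iff, Set.image_singleton, Ideal.mem_span_singleton]

theorem sum_mul_prod_X_mem_span_X_image {ι : Type*} (s : Finset ι) (f : ι → MvPolynomial σ R)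
    (S : ι → Finset σ) {A : Set σ} (hA : ∀ i ∈ s, ∃ v ∈ S i, v ∈ A) :
    ∑ i ∈ s, f i * ∏ x ∈ S i, X x ∈ Ideal.span (X '' A) := by
  refine Ideal.sum_mem _ fun i hi => Ideal.mul_mem_left _ _ ?_
  obtain ⟨v, hvS, hvA⟩ := hA i hi
  exact Ideal.mem_of_dvd _ (dvd_prod_of_mem _ hvS) (Ideal.subset_span ⟨v, hvA, rfl⟩)

end MvPolynomial

namespace Fintype

variable {ι α : Type*} [DecidableEq ι] [Fintype ι] {S : ι → Finset α}

theorem card_piFinset_update_singleton_mul (S : ι → Finset α) (j : ι) (a : α) :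
    #(piFinset (Function.update S j {a})) * #(S j) = #(piFinset S) := by
  simp only [card_piFinset, Function.apply_update (fun _ => Finset.card),
    Finset.prod_update_of_mem (mem_univ j), card_singleton, one_mul]
  rw [mul_comm]
  exact (prod_eq_mul_prod_sdiff_singleton_of_mem (mem_univ j) fun k => #(S k)).symm

theorem card_filter_piFinset_apply_eq_and_apply_eq_mul_le [DecidableEq α] {j₁ j₂ : ι}
    (hj : j₁ ≠ j₂) (a b : α) :
    #{w ∈ piFinset S | w j₁ = a ∧ w j₂ = b} * (#(S j₁) * #(S j₂)) ≤ #(piFinset S) := by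
  set S' := Function.update (Function.update S j₁ {a}) j₂ {b}
  have hsub : {w ∈ piFinset S | w j₁ = a ∧ w j₂ = b} ⊆ piFinset S' := by
    intro w hw
    simp only [mem_filter, mem_piFinset] at hw
    simp only [mem_piFinset, S']
    intro i
    rcases eq_or_ne i j₂ with rfl | h₂
    · simp [hw.2.2]
    rcases eq_or_ne i j₁ with rfl | h₁
    · simp [h₂, hw.2.1]
    simp [h₁, h₂, hw.1 i]
  calc #{w ∈ piFinset S | w j₁ = a ∧ w j₂ = b} * (#(S j₁) * #(S j₂))
      ≤ #(piFinset S') * #(S j₂) * #(S j₁) := by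
        rw [mul_comm #(S j₁), ← mul_assoc]
        gcongr
    _ = #(piFinset S) := by
        rw [← Function.update_of_ne hj.symm {a} S, card_piFinset_update_singleton_mul,
          card_piFinset_update_singleton_mul]

theorem apply_eq_of_mem_range_of_mem_piFinset (hS : Pairwise (Function.onFun Disjoint S))
    {w : ι → α} (hw : w ∈ piFinset S) {j : ι} {v : α} (hv : v ∈ S j) (hvw : v ∈ Set.range w) :
    w j = v := by
  obtain ⟨i, rfl⟩ := hvw
  obtain rfl : i = j := by
    by_contra hij
    exact disjoint_left.mp (hS hij) (mem_piFinset.mp hw i) hv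
  rfl

end Fintype

theorem Monotone.apply_zero_mul_apply_one_le {r : ℕ} (hr : 1 < r) {c : Fin r → ℕ}
    (hc : Monotone c) {i j : Fin r} (hij : i ≠ j) :
    c ⟨0, Nat.zero_lt_of_lt hr⟩ * c ⟨1, hr⟩ ≤ c i * c j := by
  wlog hlt : i < j generalizing i j
  · rw [mul_comm (c i)]
    exact this hij.symm (lt_of_le_of_ne (not_lt.mp hlt) hij.symm)
  exact Nat.mul_le_mul (hc (Nat.zero_le i.val)) (hc (show 1 ≤ j.val by omega))

theorem Finset.le_card_of_forall_card_mul_le {α β : Type*} [DecidableEq α] {P : Finset α}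
    {T : Finset β} {K : β → Finset α} {m : ℕ} (hP : P.Nonempty)
    (hcover : ∀ a ∈ P, ∃ t ∈ T, a ∈ K t) (hK : ∀ t ∈ T, #(K t) * m ≤ #P) : m ≤ #T := by
  have hPK : #P ≤ ∑ t ∈ T, #(K t) :=
    (card_le_card fun a ha => mem_biUnion.mpr (hcover a ha)).trans card_biUnion_le
  refine le_of_mul_le_mul_left ?_ hP.card_pos
  calc #P * m ≤ (∑ t ∈ T, #(K t)) * m := Nat.mul_le_mul_right _ hPK
    _ = ∑ t ∈ T, #(K t) * m := sum_mul _ _ _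
    _ ≤ ∑ _t ∈ T, #P := sum_le_sum hK
    _ = #P * #T := by rw [sum_const, smul_eq_mul, mul_comm]

open Fintype in
open Classical in
theorem MvPolynomial.IsHomogeneous.card_filter_mem_span_X_range_mul_le {σ R ι : Type*}
    [CommSemiring R] [DecidableEq ι] [Fintype ι] {S : ι → Finset σ} {p : MvPolynomial σ R}
    (hp : p.IsHomogeneous 1) (hp0 : p ≠ 0) (hS : Pairwise (Function.onFun Disjoint S))
    (hdvd : ∀ i, ∀ v ∈ S i, ¬ X v ∣ p) {m : ℕ} (hm : ∀ i j, i ≠ j → m ≤ #(S i) * #(S j)) :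
    #{w ∈ piFinset S | p ∈ Ideal.span (X '' Set.range w)} * m ≤ #(piFinset S) := by
  rcases eq_empty_or_nonempty {w ∈ piFinset S | p ∈ Ideal.span (X '' Set.range w)}
    with hK | ⟨w₀, hw₀⟩
  · simp [hK]
  rw [mem_filter] at hw₀
  have hvars : ↑p.vars ⊆ Set.range w₀ := hp.mem_span_X_image_iff.mp hw₀.2
  obtain ⟨m₁, hm₁⟩ := support_nonempty.mpr hp0
  obtain ⟨v₁, rfl⟩ := hp.exists_eq_single_of_mem_support hm₁
  have hv₁ : v₁ ∈ p.vars := (mem_vars_iff_mem_support v₁).mpr ⟨_, hm₁, by simp⟩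
  obtain ⟨j₁, rfl⟩ := hvars hv₁
  have hnot : ¬ ↑p.vars ⊆ ({w₀ j₁} : Set σ) := fun h =>
    hdvd j₁ (w₀ j₁) (mem_piFinset.mp hw₀.1 j₁) (hp.X_dvd_iff.mpr h)
  obtain ⟨v₂, hv₂, hv₂₁⟩ := Set.not_subset.mp hnot
  obtain ⟨j₂, rfl⟩ := hvars hv₂
  have hj : j₁ ≠ j₂ := by
    rintro rfl
    exact hv₂₁ rfl
  have hsub : {w ∈ piFinset S | p ∈ Ideal.span (X '' Set.range w)} ⊆
      {w ∈ piFinset S | w j₁ = w₀ j₁ ∧ w j₂ = w₀ j₂} := by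
    intro w hw
    rw [mem_filter] at hw ⊢
    have hw' := hp.mem_span_X_image_iff.mp hw.2
    have hw₀' := mem_piFinset.mp hw₀.1
    exact ⟨hw.1, apply_eq_of_mem_range_of_mem_piFinset hS hw.1 (hw₀' j₁) (hw' hv₁),
      apply_eq_of_mem_range_of_mem_piFinset hS hw.1 (hw₀' j₂) (hw' hv₂)⟩
  calc _ ≤ #{w ∈ piFinset S | w j₁ = w₀ j₁ ∧ w j₂ = w₀ j₂} * (#(S j₁) * #(S j₂)) :=
        Nat.mul_le_mul (card_le_card hsub) (hm _ _ hj)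
    _ ≤ #(piFinset S) := card_filter_piFinset_apply_eq_and_apply_eq_mul_le hj _ _

theorem stmt_3 {K σ : Type*} [Field K] (d r : ℕ) (hr : 2 ≤ r)
    (l : Fin d → MvPolynomial σ K) (hl : ∀ j, (l j).IsHomogeneous 1)
    (hne : (∏ j, l j) ≠ 0)
    -- `T` indexes a set of representatives of the distinct linear factors of `bl = ∏ l j`
    -- up to scaling; `T.card` is the number `λ` of distinct factors.
    (T : Finset (Fin d)) (hT : ∀ j, ∃ t ∈ T, ∃ c : K, l j = c • l t)
    (S : Fin r → Finset σ) (hdisj : Pairwise (Function.onFun Disjoint S))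
    (hmono : Monotone fun i => (S i).card)
    (f : Fin r → MvPolynomial σ K)
    (heq : (∏ j, l j) = ∑ i, f i * ∏ x ∈ S i, X x)
    (hlam : T.card < (S ⟨0, by omega⟩).card * (S ⟨1, by omega⟩).card) :
    ∃ v : σ, (X v : MvPolynomial σ K) ∣ ∏ j, l j ∧ ∃ i, v ∈ S i := by
  classical
  by_contra! hcon
  have hl0 : ∀ j, l j ≠ 0 := fun j h => hne (prod_eq_zero (mem_univ j) h)
  have hcover : ∀ w ∈ Fintype.piFinset S, ∃ t ∈ T, l t ∈ Ideal.span (X '' Set.range w) := by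
    intro w hw
    have hbl : ∏ j, l j ∈ Ideal.span (X '' Set.range w) := heq ▸
      sum_mul_prod_X_mem_span_X_image _ f S fun i _ => ⟨w i, Fintype.mem_piFinset.mp hw i, i, rfl⟩
    obtain ⟨j, -, hj⟩ := (isPrime_span_X_image (Set.range w)).prod_mem_iff.mp hbl
    obtain ⟨t, ht, c, hc⟩ := hT j
    have hc0 : c ≠ 0 := by
      rintro rfl
      exact hl0 j (by simpa using hc)
    rw [hc, ← C_mul', Ideal.unit_mul_mem_iff_mem _ (hc0.isUnit.map C)] at hj
    exact ⟨t, ht, hj⟩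
  have hS₀ : (S ⟨0, by omega⟩).Nonempty := card_pos.mp (Nat.pos_of_mul_pos_right hlam.pos)
  refine hlam.not_ge (Finset.le_card_of_forall_card_mul_le ?_ ?_ fun t _ =>
    (hl t).card_filter_mem_span_X_range_mul_le (hl0 t) hdisj ?_ fun i j hij =>
      hmono.apply_zero_mul_apply_one_le hr hij)
  · exact Fintype.piFinset_nonempty.mpr fun i =>
      card_pos.mp (hS₀.card_pos.trans_le (hmono (Nat.zero_le i.val)))
  · intro w hw
    obtain ⟨t, ht, hwt⟩ := hcover w hw
    exact ⟨t, ht, mem_filter.mpr ⟨hw, hwt⟩⟩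
  · exact fun i v hv hdvd => hcon v (hdvd.trans (dvd_prod_of_mem l (mem_univ t))) i hv
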